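/- Fix a, b, c ∈ ℂ with a ≠ b, |c| = 1, and c ≠ (a−b)²/|a−b|², let d > 0, S_t = [[a, t], [ct, b]], and E_d = ⋃_{t ∈ (0,d)} W(S_t). Then a, b ∈ ∂(W(S_d)) and E_d = int(W(S_d)) ∪ {a, b}; in particular, E_d is neither open nor closed in ℂ. -/

import Mathlib

/-!
Write `c = w²` with `‖w‖ = 1`. The substitution `x₁ = w β` turns `⟨S_t x, x⟩` into
`(a + b)/2 + p (a - b)/2 + q t w` with `(p, q) = (|x₀|² - |β|², 2 Re (conj x₀ β))`, and these pairs
fill the closed unit disk. So `W(S_t)` is the image of the disk under an affine map of `ℂ`, which is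
a homeomorphism because the hypothesis on `c` says exactly that `a - b` and `w` are `ℝ`-independent.
Moreover `W(S_t)` is the image under the map for `W(S_d)` of the disk squeezed vertically by
`t / d`; these squeezed disks exhaust the open disk together with `±1`, which are sent to `a`
and `b`.
-/

/-- The numerical range of a `2 × 2` complex matrix. -/
noncomputable def numRange (M : Matrix (Fin 2) (Fin 2) ℂ) : Set ℂ :=
  {z | ∃ x : EuclideanSpace ℂ (Fin 2), ‖x‖ = 1 ∧
    z = inner (𝕜 := ℂ) x (Matrix.toEuclideanCLM (𝕜 := ℂ) M x)}

open Complex ComplexConjugate Metric Set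

lemma Complex.norm_le_one_iff_sq (z : ℂ) : ‖z‖ ≤ 1 ↔ z.re ^ 2 + z.im ^ 2 ≤ 1 := by
  rw [← sq_le_one_iff₀ (norm_nonneg z), Complex.sq_norm, normSq_apply]; ring_nf

lemma Complex.norm_lt_one_iff_sq (z : ℂ) : ‖z‖ < 1 ↔ z.re ^ 2 + z.im ^ 2 < 1 := by
  rw [← sq_lt_one_iff₀ (norm_nonneg z), Complex.sq_norm, normSq_apply]; ring_nf

lemma mem_numRange_iff (M : Matrix (Fin 2) (Fin 2) ℂ) (z : ℂ) :
    z ∈ numRange M ↔ ∃ x₀ x₁ : ℂ, normSq x₀ + normSq x₁ = 1 ∧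
      z = conj x₀ * (M 0 0 * x₀ + M 0 1 * x₁) + conj x₁ * (M 1 0 * x₀ + M 1 1 * x₁) := by
  have hnorm (x : EuclideanSpace ℂ (Fin 2)) : ‖x‖ = 1 ↔ normSq (x 0) + normSq (x 1) = 1 := by
    rw [EuclideanSpace.norm_eq, Fin.sum_univ_two, Real.sqrt_eq_one, Complex.sq_norm,
      Complex.sq_norm]
  have hinner (x : EuclideanSpace ℂ (Fin 2)) :
      inner (𝕜 := ℂ) x (Matrix.toEuclideanCLM (𝕜 := ℂ) M x)
        = conj (x 0) * (M 0 0 * x 0 + M 0 1 * x 1) + conj (x 1) * (M 1 0 * x 0 + M 1 1 * x 1) := by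
    simp only [PiLp.inner_apply, Matrix.ofLp_toEuclideanCLM, Matrix.mulVec, dotProduct,
      Fin.sum_univ_two, RCLike.inner_apply]
    ring
  constructor
  · rintro ⟨x, hx, rfl⟩
    exact ⟨x 0, x 1, (hnorm x).mp hx, hinner x⟩
  · rintro ⟨x₀, x₁, hx, rfl⟩
    refine ⟨!₂[x₀, x₁], (hnorm _).mpr hx, ?_⟩
    rw [hinner]; rfl

-- The Hopf map `S³ → S²`, `(α, β) ↦ (|α|² - |β|², 2 conj α β)`, followed by projection onto a disk.
def hopfDisk (α β : ℂ) : ℂ := ⟨normSq α - normSq β, 2 * (conj α * β).re⟩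

lemma norm_hopfDisk_le_one {α β : ℂ} (h : normSq α + normSq β = 1) : ‖hopfDisk α β‖ ≤ 1 := by
  have hre : (conj α * β).re ^ 2 ≤ normSq α * normSq β := by
    rw [← normSq_conj α, ← normSq_mul, normSq_apply]
    nlinarith [sq_nonneg (conj α * β).im]
  rw [Complex.norm_le_one_iff_sq]
  simp only [hopfDisk]
  nlinarith

lemma exists_hopfDisk_eq {ζ : ℂ} (hζ : ‖ζ‖ ≤ 1) :
    ∃ α β : ℂ, normSq α + normSq β = 1 ∧ hopfDisk α β = ζ := by
  obtain ⟨p, q⟩ := ζ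
  rw [Complex.norm_le_one_iff_sq] at hζ
  simp only at hζ
  by_cases hp : p = -1
  · have hq : q = 0 := by subst hp; nlinarith [sq_nonneg q]
    exact ⟨0, 1, by simp, by simp [hopfDisk, hp, hq]⟩
  have hp' : 0 < 1 + p := by
    rcases lt_or_gt_of_ne hp with h | h
    · nlinarith
    · linarith
  set r := √((1 + p) / 2)
  set s := √(1 - p ^ 2 - q ^ 2)
  have hr : r ^ 2 = (1 + p) / 2 := Real.sq_sqrt (by positivity)
  have hs : s ^ 2 = 1 - p ^ 2 - q ^ 2 := Real.sq_sqrt (by linarith)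
  have hr0 : r ≠ 0 := by positivity
  have hβ : normSq ⟨q / (2 * r), s / (2 * r)⟩ = (1 - p) / 2 := by
    rw [normSq_mk]
    field_simp
    nlinarith
  refine ⟨r, ⟨q / (2 * r), s / (2 * r)⟩, ?_, ?_⟩
  · rw [hβ, normSq_ofReal, ← sq, hr]
    ring
  · apply Complex.ext
    · simp only [hopfDisk, hβ, normSq_ofReal, ← sq, hr]
      ring
    · simp only [hopfDisk, conj_ofReal, re_ofReal_mul]
      field_simp

def ellipseMap (z₀ v u ζ : ℂ) : ℂ := z₀ + ζ.re * v + ζ.im * u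

lemma quadForm_eq_ellipseMap_hopfDisk {a b w α β : ℂ} (t : ℝ) (hw : normSq w = 1)
    (h : normSq α + normSq β = 1) :
    conj α * (a * α + t * (w * β)) + conj (w * β) * (w ^ 2 * t * α + b * (w * β))
      = ellipseMap ((a + b) / 2) ((a - b) / 2) (t * w) (hopfDisk α β) := by
  have hα := mul_conj α
  have hβ := mul_conj β
  have hw' := mul_conj w
  have h' : (normSq α : ℂ) + normSq β = 1 := by exact_mod_cast h
  have hre := add_conj (conj α * β)
  simp only [hopfDisk, ellipseMap, map_mul, conj_conj, hw, ofReal_one] at hre hw' ⊢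
  push_cast at hre ⊢
  linear_combination ((a + b) / 2) * h' + a * hα + b * hβ + (b * β * conj β) * hw' +
    (t * w) * hre + (t * w * α * conj β) * hw'

lemma numRange_eq_image_closedBall (a b w : ℂ) (hw : ‖w‖ = 1) (t : ℝ) :
    numRange !![a, (t : ℂ); w ^ 2 * t, b]
      = ellipseMap ((a + b) / 2) ((a - b) / 2) (t * w) '' closedBall 0 1 := by
  have hw' : normSq w = 1 := by rw [normSq_eq_norm_sq, hw, one_pow]
  ext z
  simp only [mem_numRange_iff, mem_image, mem_closedBall_zero_iff, Matrix.of_apply,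
    Matrix.cons_val', Matrix.cons_val_zero, Matrix.cons_val_one, Matrix.empty_val',
    Matrix.cons_val_fin_one]
  constructor
  · rintro ⟨x₀, x₁, hx, rfl⟩
    obtain ⟨β, rfl⟩ : ∃ β, x₁ = w * β :=
      ⟨conj w * x₁, by rw [← mul_assoc, mul_conj, hw', ofReal_one, one_mul]⟩
    rw [normSq_mul, hw', one_mul] at hx
    exact ⟨hopfDisk x₀ β, norm_hopfDisk_le_one hx, (quadForm_eq_ellipseMap_hopfDisk t hw' hx).symm⟩
  · rintro ⟨ζ, hζ, rfl⟩
    obtain ⟨α, β, h, rfl⟩ := exists_hopfDisk_eq hζ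
    exact ⟨α, w * β, by rwa [normSq_mul, hw', one_mul],
      (quadForm_eq_ellipseMap_hopfDisk t hw' h).symm⟩

lemma im_conj_mul_ne_zero {v w : ℂ} (hv : v ≠ 0) (hw : ‖w‖ = 1)
    (h : w ^ 2 ≠ v ^ 2 / (‖v‖ : ℂ) ^ 2) : (conj v * w).im ≠ 0 := by
  intro him
  apply h
  set ρ := (conj v * w).re
  have hρ : conj v * w = ρ := Complex.ext rfl (by simpa using him)
  have hρ2 : (ρ : ℂ) ^ 2 = (‖v‖ : ℂ) ^ 2 := by
    have : ‖(ρ : ℂ)‖ = ‖v‖ := by rw [← hρ, norm_mul, RCLike.norm_conj, hw, mul_one]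
    rw [norm_real, Real.norm_eq_abs] at this
    rw [← this]
    norm_cast
    exact (sq_abs ρ).symm
  have hv2 : (‖v‖ : ℂ) ^ 2 ≠ 0 := by exact_mod_cast pow_ne_zero 2 (norm_ne_zero_iff.mpr hv)
  rw [eq_div_iff hv2]
  apply mul_left_cancel₀ hv2
  linear_combination (-(v * conj v + (‖v‖ : ℂ) ^ 2) * w ^ 2) * mul_conj' v
    + v ^ 2 * (conj v * w + ρ) * hρ + v ^ 2 * hρ2

lemma exists_homeomorph_coe_eq_ellipseMap (z₀ : ℂ) {v u : ℂ} (h : (conj v * u).im ≠ 0) :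
    ∃ F : ℂ ≃ₜ ℂ, ⇑F = ellipseMap z₀ v u := by
  let L : ℂ →ₗ[ℝ] ℂ := reLm.smulRight v + imLm.smulRight u
  have hL (ζ : ℂ) : L ζ = ζ.re * v + ζ.im * u := by simp [L, real_smul]
  have hinj : Function.Injective L := by
    refine (injective_iff_map_eq_zero L).mpr fun ζ hζ ↦ ?_
    rw [hL] at hζ
    have hv : v ≠ 0 := by rintro rfl; simp at h
    -- Multiplying by `conj v` makes the `v`-coefficient real; the imaginary part isolates `ζ.im`.
    have him : ζ.im * (conj v * u).im = 0 := by
      have key : conj v * (ζ.re * v + ζ.im * u) = ↑(ζ.re * normSq v) + ζ.im * (conj v * u) := by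
        rw [ofReal_mul, ← mul_conj]
        ring
      have := congrArg (fun z ↦ (conj v * z).im) hζ
      simpa only [key, add_im, ofReal_im, im_ofReal_mul, zero_add, mul_zero, zero_im] using this
    have hζim : ζ.im = 0 := (mul_eq_zero.mp him).resolve_right h
    rw [hζim, ofReal_zero, zero_mul, add_zero, mul_eq_zero, ofReal_eq_zero] at hζ
    exact Complex.ext (hζ.resolve_right hv) hζim
  refine ⟨(LinearEquiv.ofInjectiveEndo L hinj).toContinuousLinearEquiv.toHomeomorph.trans
    (Homeomorph.addLeft z₀), funext fun ζ ↦ ?_⟩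
  simp [ellipseMap, hL, add_assoc]

def squeezeIm (s : ℝ) (ζ : ℂ) : ℂ := ⟨ζ.re, s * ζ.im⟩

lemma ellipseMap_squeezeIm (z₀ v u : ℂ) (s : ℝ) (ζ : ℂ) :
    ellipseMap z₀ v u (squeezeIm s ζ) = ellipseMap z₀ v (s * u) ζ := by
  simp only [ellipseMap, squeezeIm, ofReal_mul]
  ring

lemma iUnion_squeezeIm_closedBall {d : ℝ} (hd : 0 < d) :
    ⋃ t ∈ Ioo 0 d, squeezeIm (t / d) '' closedBall 0 1 = ball 0 1 ∪ {1, -1} := by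
  ext η
  simp only [mem_iUnion, mem_image, mem_Ioo, mem_closedBall_zero_iff, mem_union,
    mem_ball_zero_iff, mem_insert_iff, mem_singleton_iff, exists_prop]
  constructor
  · rintro ⟨t, ⟨ht0, htd⟩, ζ, hζ, rfl⟩
    have hs0 : 0 < t / d := div_pos ht0 hd
    have hs1 : t / d < 1 := (div_lt_one hd).mpr htd
    rw [Complex.norm_le_one_iff_sq] at hζ
    simp only [squeezeIm, Complex.norm_lt_one_iff_sq]
    by_cases him : ζ.im = 0
    · have hre2 : ζ.re ^ 2 ≤ 1 := by nlinarith [sq_nonneg ζ.im]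
      rw [him, mul_zero]
      rcases (sq_le_one_iff_abs_le_one ζ.re).mp hre2 |>.lt_or_eq with hre | hre
      · left; nlinarith [(sq_lt_one_iff_abs_lt_one ζ.re).mpr hre]
      · right
        rcases abs_eq (zero_le_one' ℝ) |>.mp hre with hre | hre
        · left; exact Complex.ext (by simpa using hre) (by simp)
        · right; exact Complex.ext (by simpa using hre) (by simp)
    · left
      have : 0 < ζ.im ^ 2 := by positivity
      have hs2 : (t / d) ^ 2 < 1 := by nlinarith
      nlinarith [mul_lt_mul_of_pos_right hs2 this]
  · rintro (hη | rfl | rfl)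
    · -- Squeezing by any `s ∈ (‖η‖, 1)` keeps a preimage of `η` inside the closed disk.
      obtain ⟨s, hηs, hs1⟩ := exists_between hη
      have hs0 : 0 < s := (norm_nonneg η).trans_lt hηs
      refine ⟨d * s, ⟨by positivity, by nlinarith⟩, ⟨η.re, η.im / s⟩, ?_, ?_⟩
      · have hη2 : η.re ^ 2 + η.im ^ 2 < s ^ 2 := by
          have := Complex.sq_norm η
          rw [normSq_apply] at this
          nlinarith [norm_nonneg η]
        have him : η.im ^ 2 / s ^ 2 ≤ 1 - η.re ^ 2 :=
          (div_le_iff₀ (by positivity)).mpr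
            (by nlinarith [mul_nonneg (sq_nonneg η.re) (by nlinarith : 0 ≤ 1 - s ^ 2)])
        rw [Complex.norm_le_one_iff_sq, div_pow]
        linarith
      · simp only [squeezeIm]
        congr 1
        field_simp
    · exact ⟨d / 2, ⟨by positivity, by linarith⟩, 1, by simp, by simp [squeezeIm, Complex.ext_iff]⟩
    · exact ⟨d / 2, ⟨by positivity, by linarith⟩, -1, by simp, by simp [squeezeIm, Complex.ext_iff]⟩

lemma not_isOpen_ball_union_one_neg_one : ¬ IsOpen (ball (0 : ℂ) 1 ∪ {1, -1}) := by
  intro h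
  have hsub := interior_maximal (union_subset ball_subset_closedBall ?_) h
  · rw [interior_closedBall (0 : ℂ) one_ne_zero] at hsub
    simpa using hsub (Or.inr (mem_insert 1 _))
  · simp [insert_subset_iff]

lemma not_isClosed_ball_union_one_neg_one : ¬ IsClosed (ball (0 : ℂ) 1 ∪ {1, -1}) := by
  intro h
  have hI : I ∈ closure (ball (0 : ℂ) 1) := by
    rw [closure_ball (0 : ℂ) one_ne_zero]
    simp
  have := h.closure_subset (closure_mono subset_union_left hI)
  simp [Complex.ext_iff] at this

theorem stmt_19 (a b c : ℂ) (hab : a ≠ b) (hc : ‖c‖ = 1)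
    (hc' : c ≠ (a - b) ^ 2 / (((‖a - b‖ : ℝ) : ℂ) ^ 2))
    (d : ℝ) (hd : 0 < d)
    (S : ℝ → Matrix (Fin 2) (Fin 2) ℂ)
    (hS : ∀ t : ℝ, S t = !![a, (t : ℂ); c * t, b])
    (E : Set ℂ) (hE : E = ⋃ t ∈ Set.Ioo (0 : ℝ) d, numRange (S t)) :
    a ∈ frontier (numRange (S d)) ∧ b ∈ frontier (numRange (S d)) ∧
    E = interior (numRange (S d)) ∪ {a, b} ∧
    ¬ IsOpen E ∧ ¬ IsClosed E := by
  obtain ⟨w, rfl⟩ := IsAlgClosed.exists_pow_nat_eq c two_pos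
  have hw : ‖w‖ = 1 := by
    rwa [norm_pow, pow_eq_one_iff_of_nonneg (norm_nonneg w) two_ne_zero] at hc
  have hind : (conj ((a - b) / 2) * (d * w)).im ≠ 0 := by
    have : conj ((a - b) / 2) * (d * w) = ((d / 2 : ℝ) : ℂ) * (conj (a - b) * w) := by
      simp only [map_div₀, map_ofNat, ofReal_div, ofReal_ofNat]
      ring
    rw [this, im_ofReal_mul]
    exact mul_ne_zero (by positivity) (im_conj_mul_ne_zero (sub_ne_zero.mpr hab) hw hc')
  obtain ⟨F, hF⟩ := exists_homeomorph_coe_eq_ellipseMap ((a + b) / 2) hind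
  have hW (t : ℝ) : numRange (S t) = F '' (squeezeIm (t / d) '' closedBall 0 1) := by
    rw [hS, numRange_eq_image_closedBall a b w hw, image_image, hF]
    simp_rw [ellipseMap_squeezeIm, ← mul_assoc, ← ofReal_mul, div_mul_cancel₀ t hd.ne']
  have hWd : numRange (S d) = F '' closedBall 0 1 := by
    rw [hS, numRange_eq_image_closedBall a b w hw, hF]
  have hEF : E = F '' (ball 0 1 ∪ {1, -1}) := by
    rw [hE, ← iUnion_squeezeIm_closedBall hd, image_iUnion₂]
    simp_rw [hW]
  have hF1 : F 1 = a := by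
    rw [hF, ellipseMap, one_re, one_im, ofReal_one, ofReal_zero]
    ring
  have hFm1 : F (-1) = b := by
    rw [hF, ellipseMap, neg_re, neg_im, one_re, one_im, neg_zero, ofReal_neg, ofReal_one,
      ofReal_zero]
    ring
  have hfr : frontier (numRange (S d)) = F '' sphere 0 1 := by
    rw [hWd, ← F.image_frontier, frontier_closedBall _ one_ne_zero]
  refine ⟨?_, ?_, ?_, ?_, ?_⟩
  · rw [hfr, ← hF1]; exact mem_image_of_mem F (by simp)
  · rw [hfr, ← hFm1]; exact mem_image_of_mem F (by simp)
  · rw [hEF, hWd, ← F.image_interior, interior_closedBall _ one_ne_zero, image_union, image_pair,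
      hF1, hFm1]
  · rw [hEF, F.isOpen_image]; exact not_isOpen_ball_union_one_neg_one
  · rw [hEF, F.isClosed_image]; exact not_isClosed_ball_union_one_neg_one
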